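/- Let d ≥ 1 and let a, b be Schwartz functions on ℝ^{2d}. Then 𝓕_σ(a ∗_σ b) = (𝓕_σ a) ∗_σ b = ǎ ∗_σ (𝓕_σ b), where ǎ(X) = a(−X). -/

import Mathlib

open MeasureTheory Real Complex
open scoped ENNReal NNReal InnerProductSpace

noncomputable section

/-- ℝ^d as a Euclidean space. -/
abbrev Ed (d : ℕ) : Type := EuclideanSpace ℝ (Fin d)

/-- ℝ^{2d}, written as pairs (x, ξ). -/
abbrev Pd (d : ℕ) : Type := Ed d × Ed d

/-- The standard symplectic form σ((x,ξ),(y,η)) = ⟨y,ξ⟩ − ⟨x,η⟩. -/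
def sympForm {d : ℕ} (X Y : Pd d) : ℝ := ⟪Y.1, X.2⟫_ℝ - ⟪X.1, Y.2⟫_ℝ

/-- The symplectic Fourier transform (𝓕_σ a)(X) = π^{-d} ∫ a(Y) e^{2iσ(X,Y)} dY. -/
def sFT {d : ℕ} (a : Pd d → ℂ) (X : Pd d) : ℂ :=
  ((π : ℝ) ^ d)⁻¹ • ∫ Y : Pd d, a Y * Complex.exp (2 * Complex.I * (sympForm X Y : ℂ))

/-- The symplectic short-time Fourier transform 𝒱_φ a(X,Y) = 𝓕_σ(a φ(·−X))(Y). -/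
def sSTFT {d : ℕ} (φ a : Pd d → ℂ) (X Y : Pd d) : ℂ :=
  sFT (fun Z => a Z * φ (Z - X)) Y

/-- The twisted convolution (a ∗_σ b)(X) = (2/π)^{d/2} ∫ a(X−Y) b(Y) e^{2iσ(X,Y)} dY. -/
def twConv {d : ℕ} (a b : Pd d → ℂ) (X : Pd d) : ℂ :=
  ((2 / π) ^ ((d : ℝ) / 2) : ℝ) •
    ∫ Y : Pd d, a (X - Y) * b Y * Complex.exp (2 * Complex.I * (sympForm X Y : ℂ))

/-- The Weyl product a # b = (2π)^{-d/2} a ∗_σ (𝓕_σ b). -/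
def weylProd {d : ℕ} (a b : Pd d → ℂ) (X : Pd d) : ℂ :=
  ((2 * π) ^ (-(d : ℝ) / 2) : ℝ) • twConv a (sFT b) X

/-- Polynomially moderate positive measurable weight functions (the class 𝒫). -/
def polyModerate {E : Type*} [NormedAddCommGroup E] [MeasurableSpace E] (ω : E → ℝ) : Prop :=
  (∀ x, 0 < ω x) ∧ Measurable ω ∧
    ∃ C : ℝ, 0 < C ∧ ∃ N : ℕ, ∀ x y, ω (x + y) ≤ C * ω x * (1 + ‖y‖) ^ N

/-- Weighted mixed norm ‖F‖_{L^{p,q}_{1,(ω)}}: exponent p in the first (inner)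
variable, exponent q in the second (outer) variable. -/
def mixedNorm1 {α β : Type*} [MeasureSpace α] [MeasureSpace β] (p q : ℝ≥0∞)
    (ω : α × β → ℝ) (F : α × β → ℂ) : ℝ≥0∞ :=
  eLpNorm (fun y : β => (eLpNorm (fun x : α => ‖F (x, y)‖ * ω (x, y)) p volume).toReal) q volume

/-- Weighted mixed norm ‖F‖_{L^{p,q}_{2,(ω)}}: exponent q in the second (inner)
variable, exponent p in the first (outer) variable. -/
def mixedNorm2 {α β : Type*} [MeasureSpace α] [MeasureSpace β] (p q : ℝ≥0∞)
    (ω : α × β → ℝ) (F : α × β → ℂ) : ℝ≥0∞ :=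
  eLpNorm (fun x : α => (eLpNorm (fun y : β => ‖F (x, y)‖ * ω (x, y)) q volume).toReal) p volume

/-- Weighted Lebesgue norm ‖a‖_{L^p_{(ω)}} = ‖a ω‖_{L^p}. -/
def wLpNorm {α : Type*} [MeasureSpace α] (p : ℝ≥0∞) (ω : α → ℝ) (a : α → ℂ) : ℝ≥0∞ :=
  eLpNorm (fun x => ‖a x‖ * ω x) p volume

/-- Short-time Fourier transform on ℝ^d. -/
def stft {d : ℕ} (φ f : Ed d → ℂ) (x ξ : Ed d) : ℂ :=
  ((2 * π) ^ (-(d : ℝ) / 2) : ℝ) •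
    ∫ y : Ed d, f y * (starRingEnd ℂ) (φ (y - x)) * Complex.exp (-(⟪y, ξ⟫_ℝ : ℂ) * Complex.I)

/-- Euclidean pairing on ℝ^{2d}. -/
def pairing2 {d : ℕ} (X Y : Pd d) : ℝ := ⟪X.1, Y.1⟫_ℝ + ⟪X.2, Y.2⟫_ℝ

/-- Short-time Fourier transform on ℝ^{2d}. -/
def stft2 {d : ℕ} (Φ F : Pd d → ℂ) (X Ξ : Pd d) : ℂ :=
  ((2 * π) ^ (-(2 * (d : ℝ)) / 2) : ℝ) •
    ∫ Y : Pd d, F Y * (starRingEnd ℂ) (Φ (Y - X)) * Complex.exp (-(pairing2 Y Ξ : ℂ) * Complex.I)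

/-- The Fourier transform on ℝ^{2d}. -/
def fourier2 {d : ℕ} (F : Pd d → ℂ) (Ξ : Pd d) : ℂ :=
  ((2 * π) ^ (-(2 * (d : ℝ)) / 2) : ℝ) •
    ∫ X : Pd d, F X * Complex.exp (-(pairing2 X Ξ : ℂ) * Complex.I)

/-- Kohn–Nirenberg pseudo-differential operator a(x,D). -/
def pseudoOp {d : ℕ} (a : Pd d → ℂ) (f : Ed d → ℂ) (x : Ed d) : ℂ :=
  ((2 * π) ^ (-(d : ℝ)) : ℝ) •
    ∫ ξ : Ed d, ∫ y : Ed d, a (x, ξ) * f y * Complex.exp ((⟪x - y, ξ⟫_ℝ : ℂ) * Complex.I)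

/-- L² pairing (f, g) = ∫ f conj(g). -/
def L2pair {α : Type*} [MeasureSpace α] (f g : α → ℂ) : ℂ :=
  ∫ x, f x * (starRingEnd ℂ) (g x)

/-- Cross-Wigner distribution. -/
def wigner {d : ℕ} (f g : Ed d → ℂ) (x ξ : Ed d) : ℂ :=
  ((2 * π) ^ (-(d : ℝ) / 2) : ℝ) •
    ∫ y : Ed d, f (x - (2⁻¹ : ℝ) • y) * (starRingEnd ℂ) (g (x + (2⁻¹ : ℝ) • y)) *
      Complex.exp ((⟪y, ξ⟫_ℝ : ℂ) * Complex.I)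

/-!
Each of the three sides unfolds to `(2/π)^{d/2} π^{-d}` times the iterated integral
`∫∫ a(W) b(Y) e^{2i(σ(W,Y) + σ(X,W) + σ(X,Y))} dW dY`. For `twConv (sFT a) b` this only uses
`σ(X - Y, W) = σ(X, W) + σ(W, Y)`; for the other two sides one translates a variable
(`Z = W + Y`, resp. `Y = V + X`) and applies Fubini, which is legitimate because
`a ⊗ b ∈ L¹` and the phase factor is unimodular.
-/

def expTwoI (r : ℝ) : ℂ := Complex.exp (2 * Complex.I * r)

lemma expTwoI_add (r s : ℝ) : expTwoI (r + s) = expTwoI r * expTwoI s := by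
  rw [expTwoI, expTwoI, expTwoI, ← Complex.exp_add]
  push_cast
  ring_nf

lemma norm_expTwoI (r : ℝ) : ‖expTwoI r‖ = 1 := by
  simp [expTwoI, Complex.norm_exp]

lemma measurable_expTwoI : Measurable expTwoI := by
  unfold expTwoI
  fun_prop

lemma integrable_mul_mul_expTwoI {α β : Type*} [MeasurableSpace α] [MeasurableSpace β]
    {μ : Measure α} {ν : Measure β} {a : α → ℂ} {b : β → ℂ} (ha : Integrable a μ)
    (hb : Integrable b ν) {φ : α × β → ℝ} (hφ : Measurable φ) :
    Integrable (fun P => a P.1 * b P.2 * expTwoI (φ P)) (μ.prod ν) :=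
  (ha.mul_prod hb).mul_bdd (measurable_expTwoI.comp hφ).aestronglyMeasurable
    (Filter.Eventually.of_forall fun P => (norm_expTwoI (φ P)).le)

lemma integrable_sub_mul_mul_expTwoI {G : Type*} [MeasurableSpace G] [AddGroup G]
    [MeasurableAdd₂ G] [MeasurableNeg G] {μ ν : Measure G} [SFinite μ] [SFinite ν]
    [μ.IsAddLeftInvariant] [μ.IsAddRightInvariant]
    {a b : G → ℂ} (ha : Integrable a μ) (hb : Integrable b ν) {φ : G × G → ℝ}
    (hφ : Measurable φ) :
    Integrable (fun P => a (P.1 - P.2) * b P.2 * expTwoI (φ P)) (μ.prod ν) := by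
  have hψ : Measurable fun Q : G × G => φ (Q.1 + Q.2, Q.2) := by fun_prop
  simpa [Function.comp_def] using
    (measurePreserving_sub_prod μ ν).integrable_comp_of_integrable
      (integrable_mul_mul_expTwoI ha hb hψ)

section TwistedConvolution

variable {d : ℕ}

instance : (volume : Measure (Pd d)).IsAddHaarMeasure :=
  Measure.prod.instIsAddHaarMeasure _ _

lemma sympForm_add_left (X Y Z : Pd d) : sympForm (X + Y) Z = sympForm X Z + sympForm Y Z := by
  simp only [sympForm, Prod.fst_add, Prod.snd_add, inner_add_left, inner_add_right]
  ring

lemma sympForm_add_right (X Y Z : Pd d) : sympForm X (Y + Z) = sympForm X Y + sympForm X Z := by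
  simp only [sympForm, Prod.fst_add, Prod.snd_add, inner_add_left, inner_add_right]
  ring

lemma sympForm_sub_left (X Y Z : Pd d) : sympForm (X - Y) Z = sympForm X Z - sympForm Y Z := by
  simp only [sympForm, Prod.fst_sub, Prod.snd_sub, inner_sub_left, inner_sub_right]
  ring

lemma sympForm_swap (X Y : Pd d) : sympForm Y X = -sympForm X Y := by
  unfold sympForm
  ring

lemma sympForm_self (X : Pd d) : sympForm X X = 0 := by
  unfold sympForm
  ring

lemma sFT_eq_integral (a : Pd d → ℂ) (X : Pd d) :
    sFT a X = ((π : ℝ) ^ d)⁻¹ • ∫ Y, a Y * expTwoI (sympForm X Y) := rfl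

lemma twConv_eq_integral (a b : Pd d → ℂ) (X : Pd d) :
    twConv a b X = ((2 / π) ^ ((d : ℝ) / 2) : ℝ) •
      ∫ Y, a (X - Y) * b Y * expTwoI (sympForm X Y) := rfl

def twistedPairing (a b : Pd d → ℂ) (X : Pd d) : ℂ :=
  ∫ Y, ∫ W, a W * b Y * expTwoI (sympForm W Y + sympForm X W + sympForm X Y)

lemma twConv_sFT_left (a b : Pd d → ℂ) (X : Pd d) :
    twConv (sFT a) b X =
      ((2 / π) ^ ((d : ℝ) / 2) * ((π : ℝ) ^ d)⁻¹ : ℝ) • twistedPairing a b X := by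
  have inner_eq (Y : Pd d) : sFT a (X - Y) * b Y * expTwoI (sympForm X Y) =
      ((π : ℝ) ^ d)⁻¹ •
        ∫ W, a W * b Y * expTwoI (sympForm W Y + sympForm X W + sympForm X Y) := by
    rw [sFT_eq_integral, smul_mul_assoc, smul_mul_assoc, ← integral_mul_const,
      ← integral_mul_const]
    congr 1
    refine integral_congr_ae (.of_forall fun W => ?_)
    have phase : sympForm W Y + sympForm X W + sympForm X Y =
        sympForm (X - Y) W + sympForm X Y := by
      rw [sympForm_sub_left, sympForm_swap Y W]
      ring
    simp only [phase, expTwoI_add]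
    ring
  rw [twConv_eq_integral]
  simp_rw [inner_eq]
  rw [integral_smul, twistedPairing, mul_smul]

lemma sFT_twConv {a b : Pd d → ℂ} (ha : Integrable a) (hb : Integrable b) (X : Pd d) :
    sFT (twConv a b) X =
      ((2 / π) ^ ((d : ℝ) / 2) * ((π : ℝ) ^ d)⁻¹ : ℝ) • twistedPairing a b X := by
  have inner_eq (Z : Pd d) : twConv a b Z * expTwoI (sympForm X Z) =
      ((2 / π) ^ ((d : ℝ) / 2) : ℝ) •
        ∫ Y, a (Z - Y) * b Y * expTwoI (sympForm Z Y + sympForm X Z) := by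
    rw [twConv_eq_integral, smul_mul_assoc, ← integral_mul_const]
    simp only [expTwoI_add, mul_assoc]
  have shift (Y : Pd d) : ∫ Z, a (Z - Y) * b Y * expTwoI (sympForm Z Y + sympForm X Z) =
      ∫ W, a W * b Y * expTwoI (sympForm W Y + sympForm X W + sympForm X Y) := by
    rw [← integral_add_right_eq_self _ Y]
    refine integral_congr_ae (.of_forall fun W => ?_)
    simp only [add_sub_cancel_right, sympForm_add_left, sympForm_add_right, sympForm_self]
    congr 2
    ring
  have hF : Integrable (Function.uncurry fun Z Y : Pd d =>
      a (Z - Y) * b Y * expTwoI (sympForm Z Y + sympForm X Z)) (volume.prod volume) :=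
    integrable_sub_mul_mul_expTwoI ha hb (by unfold sympForm; fun_prop)
  simp_rw [sFT_eq_integral, inner_eq]
  rw [integral_smul, integral_integral_swap hF, smul_smul, mul_comm, twistedPairing]
  simp_rw [shift]

lemma twConv_comp_neg_sFT {a b : Pd d → ℂ} (ha : Integrable a) (hb : Integrable b)
    (X : Pd d) :
    twConv (fun Z => a (-Z)) (sFT b) X =
      ((2 / π) ^ ((d : ℝ) / 2) * ((π : ℝ) ^ d)⁻¹ : ℝ) • twistedPairing a b X := by
  have inner_eq (Y : Pd d) : a (-(X - Y)) * sFT b Y * expTwoI (sympForm X Y) =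
      ((π : ℝ) ^ d)⁻¹ • ∫ W, a (Y - X) * b W * expTwoI (sympForm Y W + sympForm X Y) := by
    rw [sFT_eq_integral, mul_smul_comm, smul_mul_assoc, neg_sub, ← integral_const_mul,
      ← integral_mul_const]
    simp only [expTwoI_add, mul_assoc]
  have shift : ∫ Y, ∫ W, a (Y - X) * b W * expTwoI (sympForm Y W + sympForm X Y) =
      ∫ V, ∫ W, a V * b W * expTwoI (sympForm V W + sympForm X V + sympForm X W) := by
    rw [← integral_add_right_eq_self _ X]
    refine integral_congr_ae (.of_forall fun V => integral_congr_ae (.of_forall fun W => ?_))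
    simp only [add_sub_cancel_right, sympForm_add_left, sympForm_add_right, sympForm_self]
    congr 2
    ring
  have hG : Integrable (Function.uncurry fun V W : Pd d =>
      a V * b W * expTwoI (sympForm V W + sympForm X V + sympForm X W)) (volume.prod volume) :=
    integrable_mul_mul_expTwoI ha hb (by unfold sympForm; fun_prop)
  simp_rw [twConv_eq_integral, inner_eq]
  rw [integral_smul, shift, integral_integral_swap hG, smul_smul, twistedPairing]

end TwistedConvolution

theorem stmt19_general (d : ℕ) (a b : SchwartzMap (Pd d) ℂ) (X : Pd d) :
    sFT (twConv (⇑a) (⇑b)) X = twConv (sFT (⇑a)) (⇑b) X ∧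
      twConv (sFT (⇑a)) (⇑b) X = twConv (fun Z : Pd d => a (-Z)) (sFT (⇑b)) X := by
  have hl := sFT_twConv a.integrable b.integrable X
  have hm := twConv_sFT_left a b X
  have hr := twConv_comp_neg_sFT a.integrable b.integrable X
  exact ⟨hl.trans hm.symm, hm.trans hr.symm⟩

theorem stmt19 (d : ℕ) (hd : 1 ≤ d) (a b : SchwartzMap (Pd d) ℂ) (X : Pd d) :
    sFT (twConv (⇑a) (⇑b)) X = twConv (sFT (⇑a)) (⇑b) X ∧
      twConv (sFT (⇑a)) (⇑b) X = twConv (fun Z : Pd d => a (-Z)) (sFT (⇑b)) X :=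
  stmt19_general d a b X

end
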